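/- Let x_l < x_r, let β be continuously differentiable on [x_l, x_r] with β(x) ≥ β_0 > 0 for all x, let q and f be continuous on [x_l, x_r], and let u be three times continuously differentiable on [x_l, x_r] satisfying β(x)·u''(x) + β'(x)·u'(x) − q(x)·u(x) + f(x) = 0 for all x. Then there exists a constant C > 0 such that for every n ≥ 1 and every partition x_l = x_0 < x_1 < ... < x_n = x_r with mesh size h = max_k (x_{k+1} − x_k), the function v_h^{new} defined on each element [x_k, x_{k+1}] by v_h^{new}(x) = u_I^k(x) − (β'(x)/(2β(x)))·(x−x_k)(x−x_{k+1})·(u(x_{k+1})−u(x_k))/(x_{k+1}−x_k) + (q(x)/(2β(x)))·(x−x_k)(x−x_{k+1})·u_I^k(x) − (f(x)/(2β(x)))·(x−x_k)(x−x_{k+1}), where u_I^k is the linear interpolant of u on [x_k, x_{k+1}], satisfies |u(x) − v_h^{new}(x)| ≤ C·h^3 for all x in [x_l, x_r]. -/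

import Mathlib

/-!
On an element `[a, b]` of length `h`, eliminating `f` through the equation writes `u - v_h^{new}`
as `u - u_I - u''(t) (t - a) (t - b) / 2` plus `(t - a) (t - b) / (2 β)` times
`β' · (slope - u') - q · (u_I - u)`. Linear interpolation reproduces the second-order Taylor
polynomial of `u` at `t` up to exactly `-u''(t) (t - a) (t - b) / 2`, so the first term is the
interpolated Taylor remainder, `O(h³)`; the slope and interpolation errors are `O(h)`, so the
second term is `O(h²) · O(h)`.
-/

open Set

theorem abs_sub_le_sub_of_abs_hasDerivWithinAt_le {g g' φ φ' : ℝ → ℝ} {a b : ℝ} (hab : a ≤ b)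
    (hg : ∀ z ∈ Icc a b, HasDerivWithinAt g (g' z) (Icc a b) z)
    (hφ : ∀ z ∈ Icc a b, HasDerivWithinAt φ (φ' z) (Icc a b) z)
    (hle : ∀ z ∈ Ioo a b, |g' z| ≤ φ' z) : |g b - g a| ≤ φ b - φ a := by
  have le_of_nonneg {ψ ψ' : ℝ → ℝ} (hψ : ∀ z ∈ Icc a b, HasDerivWithinAt ψ (ψ' z) (Icc a b) z)
      (h0 : ∀ z ∈ Ioo a b, 0 ≤ ψ' z) : ψ a ≤ ψ b := by
    refine monotoneOn_of_hasDerivWithinAt_nonneg (convex_Icc a b)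
      (fun z hz => (hψ z hz).continuousWithinAt) ?_ (by rwa [interior_Icc])
      (left_mem_Icc.2 hab) (right_mem_Icc.2 hab) hab
    rw [interior_Icc]
    exact fun z hz => (hψ z (Ioo_subset_Icc_self hz)).mono Ioo_subset_Icc_self
  have hminus := le_of_nonneg (ψ := fun z => φ z - g z) (fun z hz => (hφ z hz).sub (hg z hz))
    fun z hz => sub_nonneg.2 ((le_abs_self _).trans (hle z hz))
  have hplus := le_of_nonneg (ψ := fun z => φ z + g z) (fun z hz => (hφ z hz).add (hg z hz))
    fun z hz => by linarith [neg_abs_le (g' z), hle z hz]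
  rw [abs_le]
  constructor <;> linarith

theorem abs_sub_le_of_abs_hasDerivWithinAt_le_pow {s : Set ℝ} (hs : Convex ℝ s) {g g' : ℝ → ℝ}
    (hg : ∀ z ∈ s, HasDerivWithinAt g (g' z) s z) {x y c : ℝ} {m : ℕ}
    (hle : ∀ z ∈ s, |g' z| ≤ c * |z - x| ^ m) (hx : x ∈ s) (hy : y ∈ s) :
    |g y - g x| ≤ c * |y - x| ^ (m + 1) / (m + 1) := by
  have hm : (m : ℝ) + 1 ≠ 0 := by positivity
  rcases le_total x y with hxy | hyx
  · have hsub : Icc x y ⊆ s := hs.ordConnected.out hx hy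
    have hφ : ∀ z ∈ Icc x y, HasDerivWithinAt (fun z => c * (z - x) ^ (m + 1) / (m + 1))
        (c * (z - x) ^ m) (Icc x y) z := by
      refine fun z _ => HasDerivAt.hasDerivWithinAt <|
        ((((hasDerivAt_id' z).sub_const x).pow (m + 1)).const_mul c |>.div_const _).congr_deriv ?_
      push_cast
      field_simp
    have := abs_sub_le_sub_of_abs_hasDerivWithinAt_le hxy
      (fun z hz => (hg z (hsub hz)).mono hsub) hφ
      fun z hz => by simpa [abs_of_pos (sub_pos.2 hz.1)] using hle z (hsub (Ioo_subset_Icc_self hz))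
    simpa [abs_of_nonneg (sub_nonneg.2 hxy)] using this
  · have hsub : Icc y x ⊆ s := hs.ordConnected.out hy hx
    have hφ : ∀ z ∈ Icc y x, HasDerivWithinAt (fun z => -(c * (x - z) ^ (m + 1) / (m + 1)))
        (c * (x - z) ^ m) (Icc y x) z := by
      refine fun z _ => HasDerivAt.hasDerivWithinAt <|
        ((((hasDerivAt_id' z).const_sub x).pow (m + 1)).const_mul c |>.div_const _).neg.congr_deriv ?_
      push_cast
      field_simp
    have := abs_sub_le_sub_of_abs_hasDerivWithinAt_le hyx
      (fun z hz => (hg z (hsub hz)).mono hsub) hφ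
      fun z hz => by simpa [abs_of_neg (sub_neg.2 hz.2)] using hle z (hsub (Ioo_subset_Icc_self hz))
    rw [abs_sub_comm, abs_of_nonpos (sub_nonpos.2 hyx)]
    simpa using this

section Taylor

variable {s : Set ℝ} {u u' u'' u''' : ℝ → ℝ} {M t y : ℝ}

theorem abs_sub_taylor_one_le (hs : Convex ℝ s) (hu : ∀ z ∈ s, HasDerivWithinAt u (u' z) s z)
    (hu' : ∀ z ∈ s, HasDerivWithinAt u' (u'' z) s z) (hM : ∀ z ∈ s, |u'' z| ≤ M)
    (ht : t ∈ s) (hy : y ∈ s) : |u y - u t - u' t * (y - t)| ≤ M * |y - t| ^ 2 / 2 := by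
  have hlip : ∀ z ∈ s, |u' z - u' t| ≤ M * |z - t| ^ 1 := fun z hz => by
    simpa using hs.norm_image_sub_le_of_norm_hasDerivWithin_le hu' (by simpa using hM) ht hz
  have hg : ∀ z ∈ s, HasDerivWithinAt (fun z => u z - u' t * (z - t)) (u' z - u' t) s z :=
    fun z hz => (hu z hz).sub (((hasDerivAt_id' z).sub_const t).const_mul (u' t)
      |>.hasDerivWithinAt.congr_deriv (mul_one _))
  convert abs_sub_le_of_abs_hasDerivWithinAt_le_pow hs hg hlip ht hy using 2
  · ring
  · norm_num

theorem abs_sub_taylor_two_le (hs : Convex ℝ s) (hu : ∀ z ∈ s, HasDerivWithinAt u (u' z) s z)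
    (hu' : ∀ z ∈ s, HasDerivWithinAt u' (u'' z) s z)
    (hu'' : ∀ z ∈ s, HasDerivWithinAt u'' (u''' z) s z) (hM : ∀ z ∈ s, |u''' z| ≤ M)
    (ht : t ∈ s) (hy : y ∈ s) :
    |u y - u t - u' t * (y - t) - u'' t * (y - t) ^ 2 / 2| ≤ M * |y - t| ^ 3 / 6 := by
  have hderiv : ∀ z ∈ s, |u' z - u' t - u'' t * (z - t)| ≤ M / 2 * |z - t| ^ 2 := fun z hz => by
    linarith [abs_sub_taylor_one_le hs hu' hu'' hM ht hz]
  have hg : ∀ z ∈ s, HasDerivWithinAt (fun z => u z - u' t * (z - t) - u'' t * (z - t) ^ 2 / 2)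
      (u' z - u' t - u'' t * (z - t)) s z := by
    refine fun z hz => ((hu z hz).sub ?_).sub ?_
    · exact ((hasDerivAt_id' z).sub_const t).const_mul (u' t)
        |>.hasDerivWithinAt.congr_deriv (mul_one _)
    · refine (((hasDerivAt_id' z).sub_const t).pow 2).const_mul (u'' t) |>.div_const 2
        |>.hasDerivWithinAt.congr_deriv ?_
      ring
  convert abs_sub_le_of_abs_hasDerivWithinAt_le_pow hs hg hderiv ht hy using 1
  · congr 1; ring
  · push_cast
    ring

end Taylor

/-- `linearInterpolant u a b` and `modifiedInterpolant β β' q f u a b` are the paper's `u_I` and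
`v_h^{new}` on the element `[a, b]`. -/
noncomputable def linearInterpolant (u : ℝ → ℝ) (a b t : ℝ) : ℝ :=
  u a * (b - t) / (b - a) + u b * (t - a) / (b - a)

noncomputable def modifiedInterpolant (β β' q f u : ℝ → ℝ) (a b t : ℝ) : ℝ :=
  linearInterpolant u a b t
    - β' t / (2 * β t) * (t - a) * (t - b) * ((u b - u a) / (b - a))
    + q t / (2 * β t) * (t - a) * (t - b) * linearInterpolant u a b t
    - f t / (2 * β t) * (t - a) * (t - b)

section Interpolation

variable {u g : ℝ → ℝ} {a b t B : ℝ}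

theorem abs_linearInterpolant_le (hab : a < b) (ht : t ∈ Icc a b) (ha : |g a| ≤ B)
    (hb : |g b| ≤ B) : |linearInterpolant g a b t| ≤ B := by
  have hba : 0 < b - a := sub_pos.2 hab
  calc |linearInterpolant g a b t|
      ≤ |g a| * (b - t) / (b - a) + |g b| * (t - a) / (b - a) := by
        unfold linearInterpolant
        refine (abs_add_le _ _).trans_eq ?_
        rw [abs_div, abs_div, abs_mul, abs_mul, abs_of_nonneg (sub_nonneg.2 ht.2),
          abs_of_nonneg (sub_nonneg.2 ht.1), abs_of_pos hba]
    _ ≤ B * (b - t) / (b - a) + B * (t - a) / (b - a) := by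
        gcongr <;> linarith [ht.1, ht.2]
    _ = B := by field_simp; ring

theorem linearInterpolant_sub_quadratic (hab : a ≠ b) (c d : ℝ) :
    linearInterpolant u a b t - (u t - c * (t - a) * (t - b) / 2) =
      linearInterpolant (fun y => u y - u t - d * (y - t) - c * (y - t) ^ 2 / 2) a b t := by
  have : b - a ≠ 0 := sub_ne_zero.2 hab.symm
  unfold linearInterpolant
  field_simp
  ring

theorem linearInterpolant_sub_self (hab : a ≠ b) :
    linearInterpolant u a b t - u t = linearInterpolant (fun y => u y - u t) a b t := by
  simpa using linearInterpolant_sub_quadratic (u := u) (t := t) hab 0 0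

end Interpolation

section Element

variable {s : Set ℝ} {β β' q f u u' u'' u''' : ℝ → ℝ} {a b t M : ℝ}

theorem abs_sub_le_of_mem_Icc {y : ℝ} (hy : y ∈ Icc a b) (ht : t ∈ Icc a b) :
    |y - t| ≤ b - a := by
  simpa [Real.dist_eq] using Real.dist_le_of_mem_Icc hy ht

theorem abs_linearInterpolant_sub_le (hs : Convex ℝ s)
    (hu : ∀ z ∈ s, HasDerivWithinAt u (u' z) s z) (hM : ∀ z ∈ s, |u' z| ≤ M)
    (ha : a ∈ s) (hb : b ∈ s) (hab : a < b) (ht : t ∈ Icc a b) :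
    |linearInterpolant u a b t - u t| ≤ M * (b - a) := by
  have hts : t ∈ s := hs.ordConnected.out ha hb ht
  have hM₀ : 0 ≤ M := (abs_nonneg _).trans (hM t hts)
  have hlip : ∀ y ∈ Icc a b, |u y - u t| ≤ M * (b - a) := fun y hy => by
    have := hs.norm_image_sub_le_of_norm_hasDerivWithin_le hu (by simpa using hM) hts
      (hs.ordConnected.out ha hb hy)
    simp only [Real.norm_eq_abs] at this
    exact this.trans (mul_le_mul_of_nonneg_left (abs_sub_le_of_mem_Icc hy ht) hM₀)
  rw [linearInterpolant_sub_self hab.ne]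
  exact abs_linearInterpolant_le hab ht (hlip a (left_mem_Icc.2 hab.le))
    (hlip b (right_mem_Icc.2 hab.le))

theorem abs_slope_sub_deriv_le (hs : Convex ℝ s)
    (hu : ∀ z ∈ s, HasDerivWithinAt u (u' z) s z)
    (hu' : ∀ z ∈ s, HasDerivWithinAt u' (u'' z) s z) (hM : ∀ z ∈ s, |u'' z| ≤ M)
    (ha : a ∈ s) (hb : b ∈ s) (hab : a < b) (ht : t ∈ Icc a b) :
    |(u b - u a) / (b - a) - u' t| ≤ M * (b - a) / 2 := by
  have hts : t ∈ s := hs.ordConnected.out ha hb ht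
  have hM₀ : 0 ≤ M := (abs_nonneg _).trans (hM t hts)
  have hba : 0 < b - a := sub_pos.2 hab
  have hsplit : (u b - u a) / (b - a) - u' t =
      ((u b - u t - u' t * (b - t)) - (u a - u t - u' t * (a - t))) / (b - a) := by
    field_simp
    ring
  rw [hsplit, abs_div, abs_of_pos hba, div_le_iff₀ hba]
  calc |(u b - u t - u' t * (b - t)) - (u a - u t - u' t * (a - t))|
      ≤ |u b - u t - u' t * (b - t)| + |u a - u t - u' t * (a - t)| := abs_sub _ _
    _ ≤ M * |b - t| ^ 2 / 2 + M * |a - t| ^ 2 / 2 :=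
        add_le_add (abs_sub_taylor_one_le hs hu hu' hM hts hb)
          (abs_sub_taylor_one_le hs hu hu' hM hts ha)
    _ ≤ M * (b - a) / 2 * (b - a) := by
        rw [sq_abs, sq_abs]
        nlinarith [mul_nonneg hM₀ (mul_nonneg (sub_nonneg.2 ht.1) (sub_nonneg.2 ht.2))]

theorem abs_sub_linearInterpolant_sub_le (hs : Convex ℝ s)
    (hu : ∀ z ∈ s, HasDerivWithinAt u (u' z) s z)
    (hu' : ∀ z ∈ s, HasDerivWithinAt u' (u'' z) s z)
    (hu'' : ∀ z ∈ s, HasDerivWithinAt u'' (u''' z) s z) (hM : ∀ z ∈ s, |u''' z| ≤ M)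
    (ha : a ∈ s) (hb : b ∈ s) (hab : a < b) (ht : t ∈ Icc a b) :
    |u t - linearInterpolant u a b t - u'' t * (t - a) * (t - b) / 2| ≤ M * (b - a) ^ 3 / 6 := by
  have hts : t ∈ s := hs.ordConnected.out ha hb ht
  have hM₀ : 0 ≤ M := (abs_nonneg _).trans (hM t hts)
  have hrem : ∀ y ∈ Icc a b,
      |u y - u t - u' t * (y - t) - u'' t * (y - t) ^ 2 / 2| ≤ M * (b - a) ^ 3 / 6 :=
    fun y hy => (abs_sub_taylor_two_le hs hu hu' hu'' hM hts (hs.ordConnected.out ha hb hy)).trans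
      (by gcongr; exact abs_sub_le_of_mem_Icc hy ht)
  have := abs_linearInterpolant_le
    (g := fun y => u y - u t - u' t * (y - t) - u'' t * (y - t) ^ 2 / 2) hab ht
    (hrem a (left_mem_Icc.2 hab.le)) (hrem b (right_mem_Icc.2 hab.le))
  rw [← linearInterpolant_sub_quadratic hab.ne, abs_sub_comm] at this
  convert this using 2
  ring

theorem sub_modifiedInterpolant_eq (hab : a ≠ b) (hβ : β t ≠ 0)
    (hode : β t * u'' t + β' t * u' t - q t * u t + f t = 0) :
    u t - modifiedInterpolant β β' q f u a b t =
      (u t - linearInterpolant u a b t - u'' t * (t - a) * (t - b) / 2)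
        + (t - a) * (t - b) / (2 * β t) * (β' t * ((u b - u a) / (b - a) - u' t)
          - q t * (linearInterpolant u a b t - u t)) := by
  have hf : f t = q t * u t - β t * u'' t - β' t * u' t := by linear_combination hode
  have : b - a ≠ 0 := sub_ne_zero.2 hab.symm
  unfold modifiedInterpolant
  rw [hf]
  field_simp
  ring

theorem abs_sub_modifiedInterpolant_le {M₁ M₂ M₃ Mβ Mq β₀ : ℝ} (hs : Convex ℝ s)
    (hu : ∀ z ∈ s, HasDerivWithinAt u (u' z) s z)
    (hu' : ∀ z ∈ s, HasDerivWithinAt u' (u'' z) s z)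
    (hu'' : ∀ z ∈ s, HasDerivWithinAt u'' (u''' z) s z)
    (hM₁ : ∀ z ∈ s, |u' z| ≤ M₁) (hM₂ : ∀ z ∈ s, |u'' z| ≤ M₂) (hM₃ : ∀ z ∈ s, |u''' z| ≤ M₃)
    (ha : a ∈ s) (hb : b ∈ s) (hab : a < b) (ht : t ∈ Icc a b)
    (hβ₀ : 0 < β₀) (hβ : β₀ ≤ β t) (hβ' : |β' t| ≤ Mβ) (hq : |q t| ≤ Mq)
    (hode : β t * u'' t + β' t * u' t - q t * u t + f t = 0) :
    |u t - modifiedInterpolant β β' q f u a b t|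
      ≤ (M₃ / 6 + (Mβ * M₂ / 2 + Mq * M₁) / (8 * β₀)) * (b - a) ^ 3 := by
  have hβpos : 0 < β t := hβ₀.trans_le hβ
  have hbubble : |(t - a) * (t - b) / (2 * β t)| ≤ (b - a) ^ 2 / 4 / (2 * β₀) := by
    rw [abs_div, abs_of_pos (by positivity : 0 < 2 * β t)]
    refine div_le_div₀ (by positivity) ?_ (by positivity) (by linarith)
    rw [abs_le]
    constructor <;> nlinarith [sq_nonneg (2 * t - a - b), ht.1, ht.2]
  have hslope := abs_slope_sub_deriv_le hs hu hu' hM₂ ha hb hab ht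
  have hinterp := abs_linearInterpolant_sub_le hs hu hM₁ ha hb hab ht
  have hbase := abs_sub_linearInterpolant_sub_le hs hu hu' hu'' hM₃ ha hb hab ht
  have hMβ : 0 ≤ Mβ := (abs_nonneg _).trans hβ'
  have hMq : 0 ≤ Mq := (abs_nonneg _).trans hq
  rw [sub_modifiedInterpolant_eq hab.ne hβpos.ne' hode]
  calc _ ≤ |u t - linearInterpolant u a b t - u'' t * (t - a) * (t - b) / 2|
        + |(t - a) * (t - b) / (2 * β t)| * (|β' t| * |(u b - u a) / (b - a) - u' t|
          + |q t| * |linearInterpolant u a b t - u t|) := by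
        refine (abs_add_le _ _).trans (add_le_add_right ?_ _)
        rw [abs_mul, ← abs_mul (β' t), ← abs_mul (q t)]
        exact mul_le_mul_of_nonneg_left (abs_sub _ _) (abs_nonneg _)
    _ ≤ M₃ * (b - a) ^ 3 / 6
        + (b - a) ^ 2 / 4 / (2 * β₀) * (Mβ * (M₂ * (b - a) / 2) + Mq * (M₁ * (b - a))) := by
        gcongr
    _ = (M₃ / 6 + (Mβ * M₂ / 2 + Mq * M₁) / (8 * β₀)) * (b - a) ^ 3 := by
        field_simp
        ring

end Element

theorem exists_pos_abs_le_of_continuousOn {α : Type*} [TopologicalSpace α] {s : Set α}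
    (hs : IsCompact s) {g : α → ℝ} (hg : ContinuousOn g s) : ∃ M > 0, ∀ z ∈ s, |g z| ≤ M := by
  obtain ⟨M, hM⟩ := hs.exists_bound_of_continuousOn hg
  exact ⟨max M 1, by positivity, fun z hz => (hM z hz).trans (le_max_left _ _)⟩

section Partition

variable {x : ℕ → ℝ} {n : ℕ}

theorem exists_mem_Icc_succ_of_mem_Icc (hn : 1 ≤ n) {t : ℝ} (ht : t ∈ Icc (x 0) (x n)) :
    ∃ k < n, t ∈ Icc (x k) (x (k + 1)) := by
  classical
  have hex : ∃ k, t ≤ x (k + 1) := ⟨n - 1, by rw [Nat.sub_add_cancel hn]; exact ht.2⟩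
  refine ⟨Nat.find hex, ?_, ?_, Nat.find_spec hex⟩
  · have := Nat.find_min' hex (m := n - 1) (by rw [Nat.sub_add_cancel hn]; exact ht.2)
    omega
  · rcases hk : Nat.find hex with _ | k
    · exact ht.1
    · exact (not_le.1 (Nat.find_min hex (hk ▸ k.lt_succ_self))).le

theorem Icc_succ_subset_Icc_of_monotoneOn (hx : MonotoneOn x (Iic n)) {k : ℕ} (hk : k < n) :
    Icc (x k) (x (k + 1)) ⊆ Icc (x 0) (x n) :=
  Icc_subset_Icc (hx (by simp) (by simp; omega) k.zero_le) (hx (by simp; omega) (by simp) hk)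

end Partition

/-- For the Sturm–Liouville equation `β u'' + β' u' − q u + f = 0` on
`[x_l, x_r]` with `β ∈ C¹`, `β ≥ β₀ > 0`, `q, f` continuous and `u ∈ C³`, there is a
constant `C > 0` such that for every partition `x_l = x 0 < x 1 < ⋯ < x n = x_r` with mesh
size `h`, the piecewise modified (bubble-corrected) interpolant `v_h^{new}` satisfies
`|u t − v_h^{new} t| ≤ C h³` on `[x_l, x_r]`. -/
theorem modified_interpolant_third_order_mesh
    (xl xr β₀ : ℝ) (hβ₀ : 0 < β₀)
    (β β' q f u u' u'' u''' : ℝ → ℝ)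
    (hβ'c : ContinuousOn β' (Set.Icc xl xr))
    (hβlb : ∀ t ∈ Set.Icc xl xr, β₀ ≤ β t)
    (hq : ContinuousOn q (Set.Icc xl xr))
    (hu' : ∀ t ∈ Set.Icc xl xr, HasDerivWithinAt u (u' t) (Set.Icc xl xr) t)
    (hu'' : ∀ t ∈ Set.Icc xl xr, HasDerivWithinAt u' (u'' t) (Set.Icc xl xr) t)
    (hu''' : ∀ t ∈ Set.Icc xl xr, HasDerivWithinAt u'' (u''' t) (Set.Icc xl xr) t)
    (hu'''c : ContinuousOn u''' (Set.Icc xl xr))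
    (hode : ∀ t ∈ Set.Icc xl xr, β t * u'' t + β' t * u' t - q t * u t + f t = 0) :
    ∃ C > 0, ∀ (n : ℕ) (hn : 1 ≤ n) (x : ℕ → ℝ),
      x 0 = xl → x n = xr → (∀ k < n, x k < x (k + 1)) →
      ∀ H : ℝ, H = (Finset.range n).sup' (Finset.nonempty_range_iff.mpr (by omega))
          (fun k => x (k + 1) - x k) →
      ∀ vh : ℝ → ℝ,
        (∀ k < n, ∀ t ∈ Set.Icc (x k) (x (k + 1)),
          vh t = (u (x k) * (x (k + 1) - t) / (x (k + 1) - x k)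
              + u (x (k + 1)) * (t - x k) / (x (k + 1) - x k))
            - β' t / (2 * β t) * (t - x k) * (t - x (k + 1))
              * ((u (x (k + 1)) - u (x k)) / (x (k + 1) - x k))
            + q t / (2 * β t) * (t - x k) * (t - x (k + 1))
              * (u (x k) * (x (k + 1) - t) / (x (k + 1) - x k)
                + u (x (k + 1)) * (t - x k) / (x (k + 1) - x k))
            - f t / (2 * β t) * (t - x k) * (t - x (k + 1))) →
        ∀ t ∈ Set.Icc xl xr, |u t - vh t| ≤ C * H ^ 3 := by
  obtain ⟨M₁, hM₁, hu'_le⟩ := exists_pos_abs_le_of_continuousOn isCompact_Icc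
    fun z hz => (hu'' z hz).continuousWithinAt
  obtain ⟨M₂, hM₂, hu''_le⟩ := exists_pos_abs_le_of_continuousOn isCompact_Icc
    fun z hz => (hu''' z hz).continuousWithinAt
  obtain ⟨M₃, hM₃, hu'''_le⟩ := exists_pos_abs_le_of_continuousOn isCompact_Icc hu'''c
  obtain ⟨Mβ, hMβ, hβ'_le⟩ := exists_pos_abs_le_of_continuousOn isCompact_Icc hβ'c
  obtain ⟨Mq, hMq, hq_le⟩ := exists_pos_abs_le_of_continuousOn isCompact_Icc hq
  refine ⟨M₃ / 6 + (Mβ * M₂ / 2 + Mq * M₁) / (8 * β₀), by positivity, ?_⟩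
  rintro n hn x rfl rfl hx H rfl vh hvh t ht
  obtain ⟨k, hk, htk⟩ := exists_mem_Icc_succ_of_mem_Icc hn ht
  have hsub := Icc_succ_subset_Icc_of_monotoneOn
    (monotoneOn_of_le_add_one ordConnected_Iic fun j _ _ hj => (hx j hj).le) hk
  have hmesh : x (k + 1) - x k ≤ _ := Finset.le_sup' (fun k => x (k + 1) - x k)
    (Finset.mem_range.2 hk)
  have hv : vh t = modifiedInterpolant β β' q f u (x k) (x (k + 1)) t := hvh k hk t htk
  rw [hv]
  refine (abs_sub_modifiedInterpolant_le (convex_Icc _ _) hu' hu'' hu''' hu'_le hu''_le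
    hu'''_le (hsub (left_mem_Icc.2 (hx k hk).le)) (hsub (right_mem_Icc.2 (hx k hk).le))
    (hx k hk) htk hβ₀ (hβlb t ht) (hβ'_le t ht) (hq_le t ht) (hode t ht)).trans ?_
  gcongr
  exact sub_nonneg.2 (hx k hk).le
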